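/- Let λ > 0, κ > 0, and let φ be an integrable complex-valued function on ℝ⁴. Then lim_{γ→∞} ∫∫ D_κ(x⁰ − y⁰, x¹ − y¹, x² − y², γ·(x³ − y³))·|φ(x)|·|φ(y)| dx dy = 0, where the integral is over ℝ⁴ × ℝ⁴ and the argument of D_κ has its time component x⁰ − y⁰ and spatial components (x¹ − y¹, x² − y², γ(x³ − y³)). -/

import Mathlib

noncomputable section

open MeasureTheory Filter

/-- Minkowski space modeled as `ℝ × ℝ³` (time component and spatial part). -/
abbrev M : Type := ℝ × EuclideanSpace ℝ (Fin 3)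

/-- The commutator-bounding function `D_κ` (with length parameter `lam`). -/
def Dkappa (lam κ : ℝ) (a : M) : ℝ :=
  if ‖a.2‖ ^ 2 ≤ a.1 ^ 2 then 1
  else lam ^ κ / (lam + ‖a.2‖ - |a.1|) ^ κ

/-- Scale the third spatial coordinate of `v ∈ ℝ³` by `γ`. -/
def scale3 (γ : ℝ) (v : EuclideanSpace ℝ (Fin 3)) : EuclideanSpace ℝ (Fin 3) :=
  WithLp.toLp 2 (fun j => if j = 2 then γ * v j else v j)

/-! Dominated convergence on `M × M`, with dominating function `‖φ x‖ * ‖φ y‖` since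
`0 ≤ D_κ ≤ 1`. Because `(x, y) ↦ x - y` is quasi-measure-preserving, almost every pair has
`x³ ≠ y³`; for such a pair the scaled spatial difference has norm at least `γ |x³ - y³|`, so
for large `γ` the argument of `D_κ` is spacelike and
`D_κ ≤ λ^κ / (γ |x³ - y³| - |x⁰ - y⁰|)^κ → 0`. -/

open scoped Topology

theorem tendsto_integral_integral_mul_sub_of_ae_tendsto
    {G ι : Type*} [AddGroup G] [MeasurableSpace G] [MeasurableAdd₂ G] [MeasurableNeg G]
    {μ : Measure G} [SFinite μ] [μ.IsAddLeftInvariant]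
    {l : Filter ι} [l.IsCountablyGenerated] {K : ι → G → ℝ}
    (hK_meas : ∀ i, AEStronglyMeasurable (K i) μ) (hK_le : ∀ i z, ‖K i z‖ ≤ 1)
    (hK_lim : ∀ᵐ z ∂μ, Tendsto (fun i => K i z) l (𝓝 0))
    {f g : G → ℝ} (hf : Integrable f μ) (hg : Integrable g μ) :
    Tendsto (fun i => ∫ x, ∫ y, K i (x - y) * (f x * g y) ∂μ ∂μ) l (𝓝 0) := by
  have hsub := quasiMeasurePreserving_sub μ μ
  have hfg : Integrable (fun p : G × G => f p.1 * g p.2) (μ.prod μ) := hf.mul_prod hg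
  have hF_meas : ∀ i, AEStronglyMeasurable
      (fun p : G × G => K i (p.1 - p.2) * (f p.1 * g p.2)) (μ.prod μ) := fun i =>
    ((hK_meas i).comp_quasiMeasurePreserving hsub).mul hfg.aestronglyMeasurable
  have hF_le : ∀ i, ∀ p : G × G,
      ‖K i (p.1 - p.2) * (f p.1 * g p.2)‖ ≤ ‖f p.1 * g p.2‖ := fun i p => by
    rw [norm_mul]
    exact mul_le_of_le_one_left (norm_nonneg _) (hK_le i _)
  have hF_lim : ∀ᵐ p ∂μ.prod μ,
      Tendsto (fun i => K i (p.1 - p.2) * (f p.1 * g p.2)) l (𝓝 0) := by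
    filter_upwards [hsub.ae hK_lim] with p hp
    simpa using hp.mul_const (f p.1 * g p.2)
  have hlim := tendsto_integral_filter_of_dominated_convergence _
    (Eventually.of_forall hF_meas) (Eventually.of_forall fun i => ae_of_all _ (hF_le i))
    hfg.norm hF_lim
  rw [integral_zero] at hlim
  exact hlim.congr fun i =>
    integral_prod _ (hfg.norm.mono' (hF_meas i) (ae_of_all _ (hF_le i)))

theorem EuclideanSpace.ae_apply_ne {ι : Type*} [Fintype ι] (i : ι) (c : ℝ) :
    ∀ᵐ w : EuclideanSpace ℝ ι, w i ≠ c :=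
  (PiLp.volume_preserving_ofLp ι).quasiMeasurePreserving.ae (Measure.ae_eval_ne _ i c)

theorem ae_snd_apply_two_ne_zero : ∀ᵐ z : M, z.2 2 ≠ 0 :=
  Measure.quasiMeasurePreserving_snd.ae (EuclideanSpace.ae_apply_ne 2 0)

section Dkappa

variable {lam κ : ℝ}

theorem Dkappa_of_abs_lt {a : M} (h : |a.1| < ‖a.2‖) :
    Dkappa lam κ a = lam ^ κ / (lam + ‖a.2‖ - |a.1|) ^ κ := by
  have h_sq : a.1 ^ 2 < ‖a.2‖ ^ 2 := by
    rw [← sq_abs a.1]; exact pow_lt_pow_left₀ h (abs_nonneg _) two_ne_zero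
  rw [Dkappa, if_neg h_sq.not_ge]

theorem Dkappa_of_le {a : M} (h : ‖a.2‖ ≤ |a.1|) : Dkappa lam κ a = 1 := by
  have h_sq : ‖a.2‖ ^ 2 ≤ a.1 ^ 2 := by
    rw [← sq_abs a.1]; exact pow_le_pow_left₀ (norm_nonneg _) h 2
  rw [Dkappa, if_pos h_sq]

theorem Dkappa_nonneg (hlam : 0 ≤ lam) (a : M) : 0 ≤ Dkappa lam κ a := by
  rcases le_or_gt ‖a.2‖ |a.1| with h | h
  · rw [Dkappa_of_le h]; exact zero_le_one
  · rw [Dkappa_of_abs_lt h]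
    have : 0 ≤ lam + ‖a.2‖ - |a.1| := by linarith
    positivity

theorem Dkappa_le_one (hlam : 0 ≤ lam) (hκ : 0 ≤ κ) (a : M) : Dkappa lam κ a ≤ 1 := by
  rcases le_or_gt ‖a.2‖ |a.1| with h | h
  · rw [Dkappa_of_le h]
  · rw [Dkappa_of_abs_lt h, div_le_one (by apply Real.rpow_pos_of_pos; linarith)]
    exact Real.rpow_le_rpow hlam (by linarith) hκ

theorem measurable_Dkappa : Measurable (Dkappa lam κ) :=
  Measurable.ite (measurableSet_le (by fun_prop) (by fun_prop)) measurable_const (by fun_prop)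

theorem tendsto_Dkappa_of_tendsto_norm {ι : Type*} {l : Filter ι} (hκ : 0 < κ) (t : ℝ)
    {u : ι → EuclideanSpace ℝ (Fin 3)} (hu : Tendsto (fun i => ‖u i‖) l atTop) :
    Tendsto (fun i => Dkappa lam κ (t, u i)) l (𝓝 0) := by
  have h_eq : ∀ᶠ i in l, lam ^ κ / (lam + ‖u i‖ - |t|) ^ κ = Dkappa lam κ (t, u i) := by
    filter_upwards [hu.eventually_gt_atTop |t|] with i hi
    exact (Dkappa_of_abs_lt (a := (t, u i)) hi).symm
  have h_den : Tendsto (fun i => (lam + ‖u i‖ - |t|) ^ κ) l atTop :=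
    (tendsto_rpow_atTop hκ).comp <|
      tendsto_atTop_add_const_right _ _ (tendsto_atTop_add_const_left _ _ hu)
  exact (tendsto_const_nhds.div_atTop h_den).congr' h_eq

end Dkappa

theorem measurable_scale3 (γ : ℝ) : Measurable (scale3 γ) := by
  refine (WithLp.measurable_toLp 2 _).comp (measurable_pi_lambda _ fun j => ?_)
  split_ifs <;> fun_prop

theorem scale3_apply_two (γ : ℝ) (v : EuclideanSpace ℝ (Fin 3)) : scale3 γ v 2 = γ * v 2 := by
  simp [scale3]

theorem tendsto_norm_scale3_atTop {v : EuclideanSpace ℝ (Fin 3)} (hv : v 2 ≠ 0) :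
    Tendsto (fun γ => ‖scale3 γ v‖) atTop atTop := by
  refine tendsto_atTop_mono (fun γ => ?_) (tendsto_id.atTop_mul_const (abs_pos.2 hv))
  calc γ * |v 2| ≤ |γ| * |v 2| := mul_le_mul_of_nonneg_right (le_abs_self γ) (abs_nonneg _)
    _ = ‖scale3 γ v 2‖ := by rw [scale3_apply_two, Real.norm_eq_abs, abs_mul]
    _ ≤ ‖scale3 γ v‖ := PiLp.norm_apply_le _ _

/-- For integrable `φ` on `ℝ⁴`:
`∫∫ D_κ(x⁰−y⁰, x¹−y¹, x²−y², γ(x³−y³)) |φ(x)| |φ(y)| dx dy → 0` as `γ → ∞`. -/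
theorem stmt18 (lam κ : ℝ) (hlam : 0 < lam) (hκ : 0 < κ)
    (φ : M → ℂ) (hφ : Integrable φ) :
    Tendsto (fun γ : ℝ => ∫ x : M, ∫ y : M,
        Dkappa lam κ (x.1 - y.1, scale3 γ (x.2 - y.2)) * (‖φ x‖ * ‖φ y‖))
      atTop (nhds 0) := by
  set K : ℝ → M → ℝ := fun γ z => Dkappa lam κ (z.1, scale3 γ z.2)
  have hK_meas : ∀ γ, AEStronglyMeasurable (K γ) := fun γ =>
    (measurable_Dkappa.comp (measurable_fst.prodMk
      ((measurable_scale3 γ).comp measurable_snd))).aestronglyMeasurable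
  have hK_le : ∀ γ z, ‖K γ z‖ ≤ 1 := fun γ z => by
    rw [Real.norm_of_nonneg (Dkappa_nonneg hlam.le _)]
    exact Dkappa_le_one hlam.le hκ.le _
  have hK_lim : ∀ᵐ z : M, Tendsto (fun γ => K γ z) atTop (𝓝 0) := by
    filter_upwards [ae_snd_apply_two_ne_zero] with z hz
    exact tendsto_Dkappa_of_tendsto_norm hκ z.1 (tendsto_norm_scale3_atTop hz)
  have : (volume : Measure M).IsAddLeftInvariant := by
    rw [Measure.volume_eq_prod]; infer_instance
  exact tendsto_integral_integral_mul_sub_of_ae_tendsto hK_meas hK_le hK_lim hφ.norm hφ.norm
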